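/- arXiv:0907.2061 — 9 statements merged into one kernel-verified Lean document; each statement's English description precedes it below -/
import Mathlib

section
/- The map F(z,w) = (F₁(z,w), F₂(z,w)) with F₁(z,w) = z·exp(z e^{2w+z}) and F₂(z,w) = [w + z/2 − (z/2)e^{2w+z} + (z²/2)exp(2z e^{2w+z}) − (3z³/4)exp(3z e^{2w+z})]·exp(z exp(z e^{2w+z}) + (z²/2)exp(2z e^{2w+z})) is an automorphism of ℂ² tangent to the identity at the origin, satisfying F(0,w) = (0,w) for all w ∈ ℂ. -/
open Complex

/-- The automorphism `F = (F₁, F₂)` built from shears and overshears. -/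
noncomputable def Fauto : ℂ × ℂ → ℂ × ℂ := fun p =>
  let z := p.1; let w := p.2
  (z * Complex.exp (z * Complex.exp (2 * w + z)),
   (w + z / 2 - z / 2 * Complex.exp (2 * w + z)
      + z ^ 2 / 2 * Complex.exp (2 * z * Complex.exp (2 * w + z))
      - 3 * z ^ 3 / 4 * Complex.exp (3 * z * Complex.exp (2 * w + z))) *
     Complex.exp (z * Complex.exp (z * Complex.exp (2 * w + z))
      + z ^ 2 / 2 * Complex.exp (2 * z * Complex.exp (2 * w + z))))


/-!
Write `F = O ∘ S₂ ∘ T ∘ S₁`, where `S₁(z, w) = (z, w + z/2)` and `S₂(Z, V) = (Z, V + Z²/2 - 3Z³/4)`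
are shears, `O(Z, V) = (Z, V e^{Z + Z²/2})` is an overshear, and `T(z, v) = (z e^t, v - t/2)` with
`t = z e^{2v}`. Shears and overshears are invertible fibrewise. `T` preserves `z e^{2v}`, hence `t`,
so it is inverted by the same formula with `t` replaced by `-t`.
-/

def shear {α β : Type*} [AddGroup β] (f : α → β) : α × β ≃ α × β :=
  Equiv.prodShear (Equiv.refl α) fun a => Equiv.addRight (f a)

noncomputable def overshear {α : Type*} (g : α → ℂ) : α × ℂ ≃ α × ℂ :=
  Equiv.prodShear (Equiv.refl α) fun a => Equiv.mulRight₀ (exp (g a)) (exp_ne_zero _)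

noncomputable def twistMap (φ : ℂ → ℂ) (p : ℂ × ℂ) : ℂ × ℂ :=
  (p.1 * exp (φ (p.1 * exp (2 * p.2))), p.2 - φ (p.1 * exp (2 * p.2)) / 2)

theorem twistMap_invariant (φ : ℂ → ℂ) (p : ℂ × ℂ) :
    (twistMap φ p).1 * exp (2 * (twistMap φ p).2) = p.1 * exp (2 * p.2) := by
  simp only [twistMap, mul_assoc, ← exp_add]
  ring_nf

theorem twistMap_neg_twistMap (φ : ℂ → ℂ) (p : ℂ × ℂ) : twistMap (-φ) (twistMap φ p) = p := by
  rw [twistMap, twistMap_invariant]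
  ext
  · simp only [twistMap, Pi.neg_apply, mul_assoc, ← exp_add, add_neg_cancel, exp_zero, mul_one]
  · simp only [twistMap, Pi.neg_apply]
    ring

noncomputable def twist (φ : ℂ → ℂ) : ℂ × ℂ ≃ ℂ × ℂ where
  toFun := twistMap φ
  invFun := twistMap (-φ)
  left_inv := twistMap_neg_twistMap φ
  right_inv p := by simpa using twistMap_neg_twistMap (-φ) p

theorem Fauto_eq_comp :
    Fauto = overshear (fun z => z + z ^ 2 / 2) ∘ shear (fun z => z ^ 2 / 2 - 3 * z ^ 3 / 4) ∘
      twist id ∘ shear (· / 2) := by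
  funext ⟨z, w⟩
  have h : 2 * (w + z / 2) = 2 * w + z := by ring
  simp only [Fauto, shear, overshear, twist, twistMap, Function.comp_apply, Equiv.prodShear_apply,
    Equiv.coe_fn_mk, Equiv.coe_refl, id_eq, Equiv.coe_addRight, Equiv.mulRight₀_apply, h, mul_pow,
    ← exp_nat_mul, Prod.mk.injEq, true_and]
  push_cast
  ring_nf

theorem Fauto_bijective : Function.Bijective Fauto := by
  rw [Fauto_eq_comp]
  exact (overshear _).bijective.comp <| (shear _).bijective.comp <| (twist id).bijective.comp
    (shear _).bijective

theorem Fauto_zero_left (w : ℂ) : Fauto (0, w) = (0, w) := by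
  simp [Fauto]

theorem hasFDerivAt_Fauto_zero : HasFDerivAt Fauto (ContinuousLinearMap.id ℂ (ℂ × ℂ)) 0 := by
  have hz := hasFDerivAt_fst (𝕜 := ℂ) (p := (0 : ℂ × ℂ)) (E := ℂ) (F := ℂ)
  have hw := hasFDerivAt_snd (𝕜 := ℂ) (p := (0 : ℂ × ℂ)) (E := ℂ) (F := ℂ)
  have hE := ((hw.const_mul 2).add hz).cexp
  have hexp (k : ℂ) := ((hz.const_mul k).mul hE).cexp
  have hZ := hz.mul (hexp 1)
  have hP := (((hw.add (hz.mul_const 2⁻¹)).sub ((hz.mul_const 2⁻¹).mul hE)).add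
      (((hz.pow 2).mul_const 2⁻¹).mul (hexp 2))).sub
      ((((hz.pow 3).const_mul 3).mul_const 4⁻¹).mul (hexp 3))
  have hQ := hZ.add (((hz.pow 2).mul_const 2⁻¹).mul (hexp 2))
  refine ((hZ.prodMk (hP.mul hQ.cexp)).congr_fderiv ?_).congr_of_eventuallyEq
    (.of_forall fun p => ?_)
  · ext <;> simp
  · simp [Fauto, div_eq_mul_inv]

/-- `F` is an automorphism of `ℂ²`, tangent to the identity at the origin,
fixing the `w`-axis pointwise. -/
theorem Fauto_properties :
    Function.Bijective Fauto ∧ Fauto (0, 0) = (0, 0) ∧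
    HasFDerivAt Fauto (ContinuousLinearMap.id ℂ (ℂ × ℂ)) (0, 0) ∧
    ∀ w : ℂ, Fauto (0, w) = (0, w) :=
  ⟨Fauto_bijective, Fauto_zero_left 0, hasFDerivAt_Fauto_zero, Fauto_zero_left⟩
end

section
/- Let (z_n) be a sequence of nonzero complex numbers satisfying 1/z_{n+1} = 1/z_n − 1 + δ_n where δ_n → 0. Then n·z_n → −1 as n → ∞; in particular |z_n| ~ 1/n. -/
open Filter Topology

/-- If `1/z_{n+1} = 1/z_n − 1 + δ_n` with `δ_n → 0`, then `n·z_n → −1`,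
so in particular `|z_n| ~ 1/n`. -/
theorem n_mul_z_tendsto_neg_one (z : ℕ → ℂ) (hz : ∀ n, z n ≠ 0)
    (δ : ℕ → ℂ) (hδ : Tendsto δ atTop (𝓝 0))
    (hrec : ∀ n, 1 / z (n + 1) = 1 / z n - 1 + δ n) :
    Tendsto (fun n : ℕ => (n : ℂ) * z n) atTop (𝓝 (-1)) := by
  have hsum : ∀ n : ℕ, 1 / z n = 1 / z 0 - n + ∑ k ∈ Finset.range n, δ k := by
    intro n
    induction n with
    | zero => simp
    | succ n ih =>
      rw [hrec n, ih, Finset.sum_range_succ]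
      push_cast
      ring
  have hd : Tendsto (fun n : ℕ => (1 / z 0) / (n : ℂ)) atTop (𝓝 0) := by
    rw [tendsto_zero_iff_norm_tendsto_zero]
    simpa using tendsto_const_div_atTop_nhds_zero_nat ‖1 / z 0‖
  have hS : Tendsto (fun n : ℕ => (∑ k ∈ Finset.range n, δ k) / (n : ℂ))
      atTop (𝓝 0) := by
    have hc := hδ.cesaro_smul
    refine hc.congr fun n => ?_
    rw [Complex.real_smul, div_eq_mul_inv, mul_comm]
    push_cast
    ring
  have h1 : Tendsto (fun n : ℕ => (1 / z n) / (n : ℂ)) atTop (𝓝 (-1)) := by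
    have := (hd.sub (tendsto_const_nhds (x := (1 : ℂ)))).add hS
    rw [zero_sub, add_zero] at this
    refine this.congr' ?_
    filter_upwards [eventually_ge_atTop 1] with n hn
    have hn0 : (n : ℂ) ≠ 0 := Nat.cast_ne_zero.mpr (by omega)
    rw [hsum n, add_div, sub_div, div_self hn0]
  have h2 := h1.inv₀ (by norm_num : (-1 : ℂ) ≠ 0)
  rw [(by norm_num : ((-1 : ℂ))⁻¹ = -1)] at h2
  refine h2.congr fun n => ?_
  simp [one_div, div_eq_mul_inv, mul_inv, mul_comm]
end

section
/- Let (u_n) be a sequence of nonzero complex numbers and (z_n) a sequence with n·z_n → −1, satisfying 1/u_{n+1} = 1/u_n + z_n + ε_n where Σ|ε_n| < ∞. Then (log n)·u_n → −1 as n → ∞; in particular |u_n| ~ 1/log n. -/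
/-!
Telescoping the recursion gives `1/u_n = 1/u_0 + ∑_{k<n} z_k + ∑_{k<n} ε_k`. The `ε`-sum
converges, while `∑_{k<n} z_k` is the weighted Cesàro sum of `(k+1) z_k → -1` with weights
`1/(k+1)`, whose partial sums are the harmonic numbers `H_n ~ log n`. Hence
`(log n)⁻¹ / u_n → -1`, and inverting gives the claim.
-/

open Filter Topology Finset Asymptotics

theorem Filter.Tendsto.weighted_cesaro_smul {E : Type*} [NormedAddCommGroup E] [NormedSpace ℝ E]
    {a : ℕ → E} {c : E} (ha : Tendsto a atTop (𝓝 c))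
    {g : ℕ → ℝ} (hg : 0 ≤ g) (hG : Tendsto (fun n => ∑ i ∈ range n, g i) atTop atTop) :
    Tendsto (fun n => (∑ i ∈ range n, g i)⁻¹ • ∑ i ∈ range n, g i • a i) atTop (𝓝 c) := by
  have hsmall : (fun i => g i • (a i - c)) =o[atTop] g := by
    simpa using (isBigO_refl g atTop).smul_isLittleO
      ((isLittleO_one_iff ℝ).2 (tendsto_sub_nhds_zero_iff.2 ha))
  have hdev := (hsmall.sum_range hg hG).tendsto_inv_smul_nhds_zero.add_const c
  rw [zero_add] at hdev
  refine hdev.congr' ?_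
  filter_upwards [hG.eventually_ne_atTop 0] with n hn
  simp only [smul_sub, sum_sub_distrib, ← sum_smul, smul_smul, inv_mul_cancel₀ hn, one_smul,
    sub_add_cancel]

theorem tendsto_harmonic_div_log :
    Tendsto (fun n : ℕ => (harmonic n : ℝ) / Real.log n) atTop (𝓝 1) := by
  have hlog : Tendsto (fun n : ℕ => Real.log n) atTop atTop :=
    Real.tendsto_log_atTop.comp tendsto_natCast_atTop_atTop
  have hequiv : (fun n : ℕ => (harmonic n : ℝ)) ~[atTop] fun n => Real.log n :=
    ((Real.tendsto_harmonic_sub_log.isBigO_one ℝ).trans_isLittleO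
      ((isLittleO_one_left_iff ℝ).2 (tendsto_norm_atTop_atTop.comp hlog))).isEquivalent
  exact (isEquivalent_iff_tendsto_one (hlog.eventually_ne_atTop 0)).1 hequiv

theorem tendsto_log_inv_smul_sum_range_of_tendsto_nat_smul
    {E : Type*} [NormedAddCommGroup E] [NormedSpace ℝ E]
    {z : ℕ → E} {c : E} (hz : Tendsto (fun n : ℕ => (n : ℝ) • z n) atTop (𝓝 c)) :
    Tendsto (fun n : ℕ => (Real.log n)⁻¹ • ∑ k ∈ range n, z k) atTop (𝓝 c) := by
  have hz0 : Tendsto z atTop (𝓝 0) := by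
    have := (tendsto_inv_atTop_nhds_zero_nat (𝕜 := ℝ)).smul hz
    rw [zero_smul] at this
    refine this.congr' ?_
    filter_upwards [eventually_ne_atTop 0] with n hn
    rw [smul_smul, inv_mul_cancel₀ (Nat.cast_ne_zero.2 hn), one_smul]
  have hsucc : Tendsto (fun n : ℕ => ((n : ℝ) + 1) • z n) atTop (𝓝 c) := by
    simpa [add_smul] using hz.add hz0
  have harm : ∀ n, (harmonic n : ℝ) = ∑ i ∈ range n, ((i : ℝ) + 1)⁻¹ := fun n => by
    simp [harmonic]
  have hH : Tendsto (fun n : ℕ => ∑ i ∈ range n, ((i : ℝ) + 1)⁻¹) atTop atTop := by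
    simpa only [one_div] using Real.tendsto_sum_range_one_div_nat_succ_atTop
  have hcancel : ∀ i : ℕ, ((i : ℝ) + 1)⁻¹ • (((i : ℝ) + 1) • z i) = z i := fun i =>
    inv_smul_smul₀ (Nat.cast_add_one_ne_zero i) _
  have hcesaro := hsucc.weighted_cesaro_smul (fun i => by simp only [Pi.zero_apply]; positivity) hH
  simp only [hcancel, ← harm] at hcesaro
  have := tendsto_harmonic_div_log.smul hcesaro
  rw [one_smul] at this
  refine this.congr' ?_
  filter_upwards [eventually_ne_atTop 0] with n hn
  have hH0 : (harmonic n : ℝ) ≠ 0 := by exact_mod_cast (harmonic_pos hn).ne'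
  rw [smul_smul]
  congr 1
  field_simp

theorem log_mul_u_tendsto_neg_one_general (u z ε : ℕ → ℂ)
    (hz : Tendsto (fun n : ℕ => (n : ℂ) * z n) atTop (𝓝 (-1)))
    (hε : Summable fun n => ‖ε n‖)
    (hrec : ∀ n, 1 / u (n + 1) = 1 / u n + z n + ε n) :
    Tendsto (fun n : ℕ => (Real.log n : ℂ) * u n) atTop (𝓝 (-1)) := by
  have hinv (n : ℕ) : (u n)⁻¹ = (u 0)⁻¹ + ∑ k ∈ range n, (z k + ε k) := by
    rw [← sub_eq_iff_eq_add', ← sum_range_sub fun k => (u k)⁻¹]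
    refine sum_congr rfl fun k _ => ?_
    simp only [← one_div, hrec]
    ring
  have hlog : Tendsto (fun n : ℕ => (Real.log n : ℂ)⁻¹) atTop (𝓝 0) := by
    simpa only [Function.comp_def, Pi.inv_apply, Complex.ofReal_inv, Complex.ofReal_zero] using
      (Complex.continuous_ofReal.tendsto 0).comp
      (Real.tendsto_log_atTop.comp tendsto_natCast_atTop_atTop).inv_tendsto_atTop
  have hzsum : Tendsto (fun n : ℕ => (Real.log n : ℂ)⁻¹ * ∑ k ∈ range n, z k) atTop (𝓝 (-1)) := by
    refine (tendsto_log_inv_smul_sum_range_of_tendsto_nat_smul (z := z) ?_).congr fun n => ?_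
    · simpa only [Complex.real_smul, Complex.ofReal_natCast] using hz
    · rw [Complex.real_smul, Complex.ofReal_inv]
  have hεsum := hε.of_norm.hasSum.tendsto_sum_nat
  have hrecip : Tendsto (fun n : ℕ => (Real.log n : ℂ)⁻¹ * (u n)⁻¹) atTop (𝓝 (-1)) := by
    have := (hlog.mul ((tendsto_const_nhds (x := (u 0)⁻¹)).add hεsum)).add hzsum
    rw [zero_mul, zero_add] at this
    refine this.congr fun n => ?_
    rw [hinv n, sum_add_distrib]
    ring
  simpa only [mul_inv, inv_inv, inv_neg, inv_one] using hrecip.inv₀ (by norm_num)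

/-- If `n·z_n → −1` and `1/u_{n+1} = 1/u_n + z_n + ε_n` with `Σ|ε_n| < ∞`, then
`(log n)·u_n → −1`, so in particular `|u_n| ~ 1/log n`. -/
theorem log_mul_u_tendsto_neg_one (u z ε : ℕ → ℂ) (hu : ∀ n, u n ≠ 0)
    (hz : Tendsto (fun n : ℕ => (n : ℂ) * z n) atTop (𝓝 (-1)))
    (hε : Summable fun n => ‖ε n‖)
    (hrec : ∀ n, 1 / u (n + 1) = 1 / u n + z n + ε n) :
    Tendsto (fun n : ℕ => (Real.log n : ℂ) * u n) atTop (𝓝 (-1)) :=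
  log_mul_u_tendsto_neg_one_general u z ε hz hε hrec
end

section
/- Let U_R = {ζ ∈ ℂ : |ζ| > R, |Arg(ζ) − π| < π/8} with a fixed branch of log. Suppose x, y ∈ U_R with |y| < |x|, and x₁ = x − 1 + a/x + b/y + E with |E| ≤ C(1/|x|² + 1/(|x||y|)). Then log(x₁) − log(x) = −1/x + E' where |E'| ≤ C'(1/|x|² + 1/(|x||y|)) for a constant C' depending only on a, b, C, R. -/
open Real

/-- `U_R = {ζ : |ζ| > R, |Arg(ζ) − π| < π/8}`. -/
def Usector (R : ℝ) : Set ℂ :=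
  {ζ : ℂ | R < ‖ζ‖ ∧ |Complex.arg (-ζ)| < π / 8}

/-- The branch of the logarithm adapted to the sector `U_R` around the
negative real axis: `log ζ := Complex.log (−ζ) (+ iπ)`, fixed up to the additive
constant, which cancels in differences. -/
noncomputable def sectorLog (ζ : ℂ) : ℂ := Complex.log (-ζ)

/-!
Writing `x₁ = x (1 + w)` with `w = (x₁ - x) / x`, the hypothesis gives `x₁ - x = -1 + O(1/R)`, so
`‖w‖ ≤ 2 / ‖x‖ ≤ 1/2`. Since `-x` lies in a narrow sector about the positive axis and `1 + w` in the
right half-plane, the logarithm is additive on `-x · (1 + w)`, whence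
`log x₁ - log x = log (1 + w) = w + O(‖w‖²)`. Finally `w + 1/x = a/x² + b/(xy) + E/x`, and every term,
including `‖w‖² ≤ 4/‖x‖²`, is `O(1/‖x‖² + 1/(‖x‖‖y‖))`.
-/

namespace Complex

theorem norm_log_one_add_sub_self_le_sq {w : ℂ} (hw : ‖w‖ ≤ 1 / 2) :
    ‖log (1 + w) - w‖ ≤ ‖w‖ ^ 2 := by
  have hinv : (1 - ‖w‖)⁻¹ ≤ 2 := by
    rw [inv_le_comm₀ (by linarith) two_pos]; linarith
  calc ‖log (1 + w) - w‖ ≤ ‖w‖ ^ 2 * (1 - ‖w‖)⁻¹ / 2 := norm_log_one_add_sub_self_le (by linarith)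
    _ ≤ ‖w‖ ^ 2 * 2 / 2 := by gcongr
    _ = ‖w‖ ^ 2 := by ring

theorem log_mul_of_abs_arg_lt_pi_div_two {u v : ℂ} (hu : u ≠ 0) (hv : v ≠ 0)
    (hu' : |arg u| < π / 2) (hv' : |arg v| < π / 2) : log (u * v) = log u + log v := by
  rw [abs_lt] at hu' hv'
  exact log_mul hu hv ⟨by linarith [pi_pos], by linarith [pi_pos]⟩

end Complex

open Complex in
theorem norm_sectorLog_sub_sub_div_le {x x₁ : ℂ} (hx₀ : x ≠ 0) (hx : |arg (-x)| < π / 2)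
    (hx₁ : ‖x₁ - x‖ ≤ ‖x‖ / 2) :
    ‖sectorLog x₁ - sectorLog x - (x₁ - x) / x‖ ≤ ‖(x₁ - x) / x‖ ^ 2 := by
  set w := (x₁ - x) / x with hw_def
  have hw : ‖w‖ ≤ 1 / 2 := by
    rw [norm_div, div_le_iff₀ (norm_pos_iff.mpr hx₀)]; linarith
  have hre : 0 < (1 + w).re := by
    have := neg_abs_le w.re
    have := (abs_re_le_norm w).trans hw
    simp only [add_re, one_re]; linarith
  have h1w : 1 + w ≠ 0 := fun h => by simp [h] at hre
  have hfactor : -x₁ = -x * (1 + w) := by rw [hw_def]; field_simp; ring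
  have hlog : sectorLog x₁ = sectorLog x + log (1 + w) := by
    rw [sectorLog, sectorLog, hfactor]
    exact log_mul_of_abs_arg_lt_pi_div_two (neg_ne_zero.mpr hx₀) h1w hx
      (abs_arg_lt_pi_div_two_iff.mpr (Or.inl hre))
  rw [hlog, add_sub_cancel_left]
  exact norm_log_one_add_sub_self_le_sq hw

theorem norm_neg_one_add_add_add_le_two {a b E x y : ℂ} {C R : ℝ} (hC : 0 ≤ C)
    (hR1 : 1 ≤ R) (hRK : ‖a‖ + ‖b‖ + 2 * C ≤ R) (hx : R < ‖x‖) (hy : R < ‖y‖)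
    (hE : ‖E‖ ≤ C * (1 / ‖x‖ ^ 2 + 1 / (‖x‖ * ‖y‖))) :
    ‖-1 + a / x + b / y + E‖ ≤ 2 := by
  have hR0 : 0 < R := by linarith
  have hxR : 1 / ‖x‖ ≤ 1 / R := one_div_le_one_div_of_le hR0 hx.le
  have hyR : 1 / ‖y‖ ≤ 1 / R := one_div_le_one_div_of_le hR0 hy.le
  have hR1' : 1 / R ≤ 1 := by rw [div_le_one hR0]; exact hR1
  have hscale : 1 / ‖x‖ ^ 2 + 1 / (‖x‖ * ‖y‖) ≤ 2 / R := by
    have hx1 : 1 / ‖x‖ ≤ 1 := hxR.trans hR1'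
    have hy1 : 1 / ‖y‖ ≤ 1 := hyR.trans hR1'
    have : 0 ≤ 1 / ‖x‖ := by positivity
    calc 1 / ‖x‖ ^ 2 + 1 / (‖x‖ * ‖y‖) = 1 / ‖x‖ * (1 / ‖x‖) + 1 / ‖x‖ * (1 / ‖y‖) := by ring
      _ ≤ 1 / R * 1 + 1 / R * 1 := by gcongr
      _ = 2 / R := by ring
  calc ‖-1 + a / x + b / y + E‖ ≤ 1 + ‖a‖ * (1 / ‖x‖) + ‖b‖ * (1 / ‖y‖) + ‖E‖ := by
        refine norm_add₄_le.trans_eq ?_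
        simp only [norm_neg, norm_one, norm_div]; ring
    _ ≤ 1 + ‖a‖ * (1 / R) + ‖b‖ * (1 / R) + C * (2 / R) := by
        have := mul_le_mul_of_nonneg_left hxR (norm_nonneg a)
        have := mul_le_mul_of_nonneg_left hyR (norm_nonneg b)
        have := hE.trans (mul_le_mul_of_nonneg_left hscale hC)
        linarith
    _ = 1 + (‖a‖ + ‖b‖ + 2 * C) / R := by ring
    _ ≤ 2 := by linarith [(div_le_one hR0).mpr hRK]

theorem norm_div_sq_add_div_mul_add_div_le {a b E x y : ℂ} {C : ℝ} (hx : 1 ≤ ‖x‖)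
    (hE : ‖E‖ ≤ C * (1 / ‖x‖ ^ 2 + 1 / (‖x‖ * ‖y‖))) :
    ‖a / x ^ 2 + b / (x * y) + E / x‖ ≤ (‖a‖ + ‖b‖ + C) * (1 / ‖x‖ ^ 2 + 1 / (‖x‖ * ‖y‖)) := by
  have hsq : 0 ≤ 1 / ‖x‖ ^ 2 := by positivity
  have hmul : 0 ≤ 1 / (‖x‖ * ‖y‖) := by positivity
  have hEx : ‖E / x‖ ≤ ‖E‖ := by
    rw [norm_div]; exact div_le_self (norm_nonneg E) hx
  calc ‖a / x ^ 2 + b / (x * y) + E / x‖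
      ≤ ‖a‖ * (1 / ‖x‖ ^ 2) + ‖b‖ * (1 / (‖x‖ * ‖y‖)) + ‖E / x‖ := by
        refine norm_add₃_le.trans_eq ?_
        simp only [norm_div, norm_pow, norm_mul]; ring
    _ ≤ (‖a‖ + ‖b‖ + C) * (1 / ‖x‖ ^ 2 + 1 / (‖x‖ * ‖y‖)) := by
        have := mul_nonneg (norm_nonneg a) hmul
        have := mul_nonneg (norm_nonneg b) hsq
        nlinarith

/-- Estimate (a): if `x₁ = x − 1 + a/x + b/y + E` with
`|E| ≤ C(1/|x|² + 1/(|x||y|))`, then `log x₁ − log x = −1/x + E'` with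
`|E'| ≤ C'(1/|x|² + 1/(|x||y|))`. -/
theorem log_first_coordinate_estimate (a b : ℂ) (C : ℝ) (hC : 0 < C) :
    ∃ R₀ : ℝ, ∀ R : ℝ, R₀ ≤ R → ∃ C' > (0 : ℝ), ∀ x y x₁ E : ℂ,
      x ∈ Usector R → y ∈ Usector R → ‖y‖ < ‖x‖ →
      x₁ = x - 1 + a / x + b / y + E →
      ‖E‖ ≤ C * (1 / ‖x‖ ^ 2 + 1 / (‖x‖ * ‖y‖)) →
      ‖sectorLog x₁ - sectorLog x + 1 / x‖ ≤ C' * (1 / ‖x‖ ^ 2 + 1 / (‖x‖ * ‖y‖)) := by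
  refine ⟨max 4 (‖a‖ + ‖b‖ + 2 * C), fun R hR => ⟨‖a‖ + ‖b‖ + C + 4, by positivity,
    fun x y x₁ E ⟨hxR, hxarg⟩ ⟨hyR, _⟩ _ hx₁ hE => ?_⟩⟩
  obtain ⟨hR4, hRK⟩ := max_le_iff.mp hR
  have hx4 : 4 ≤ ‖x‖ := by linarith
  have hx₀ : x ≠ 0 := norm_pos_iff.mp (by linarith)
  have hy₀ : y ≠ 0 := norm_pos_iff.mp (by linarith)
  have hstep : x₁ - x = -1 + a / x + b / y + E := by rw [hx₁]; ring
  have hstep_le : ‖x₁ - x‖ ≤ 2 := hstep ▸ norm_neg_one_add_add_add_le_two hC.le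
    (by linarith) hRK hxR hyR hE
  have hlog := norm_sectorLog_sub_sub_div_le (x₁ := x₁) hx₀ (hxarg.trans (by linarith [pi_pos]))
    (by linarith)
  have hsplit : sectorLog x₁ - sectorLog x + 1 / x =
      (sectorLog x₁ - sectorLog x - (x₁ - x) / x) + (a / x ^ 2 + b / (x * y) + E / x) := by
    rw [hstep]; field_simp; ring
  have hquad : ‖(x₁ - x) / x‖ ^ 2 ≤ 4 * (1 / ‖x‖ ^ 2 + 1 / (‖x‖ * ‖y‖)) := by
    have : 0 ≤ 1 / (‖x‖ * ‖y‖) := by positivity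
    calc ‖(x₁ - x) / x‖ ^ 2 ≤ (2 / ‖x‖) ^ 2 := by rw [norm_div]; gcongr
      _ = 4 * (1 / ‖x‖ ^ 2) := by ring
      _ ≤ _ := by linarith
  rw [hsplit]
  calc _ ≤ _ := norm_add_le _ _
    _ ≤ _ := add_le_add (hlog.trans hquad) (norm_div_sq_add_div_mul_add_div_le (by linarith) hE)
    _ = _ := by ring
end

section
/- Let s and τ be holomorphic on an open neighborhood of the closure of U_R with |s(y)| ≤ C/|y| and |τ(y)| ≤ C/|y|² on U_R, for R sufficiently large. Then the first-order linear ODE σ'(y) − (1 + s(y))σ(y) = τ(y) admits a holomorphic solution σ on U_R satisfying |σ(y)| ≤ C'/|y| for some constant C'. -/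
/-!
In the coordinate `w = log (-ζ)` the sector `U_R` becomes the half-strip `Re w > log R`,
`|Im w| < π / 8`, and the equation becomes `u' = (p - exp w) u + q` with `p w = ζ s ζ` and
`q w = ζ τ ζ`, so `|p| ≤ C` and `|q| ≤ C e^{-Re w}`. Holomorphic functions on a product of
intervals have primitives given by wedge integrals, so with `F` a primitive of `p - exp` the
solution is `u = e^F ∫ e^{-F} q`, integrated from `log R + 1` along a vertical segment and then
horizontally at height `Im w`. Along that path `Re (F w - F v) ≤ K + 2 (Re v - Re w)`: on the
horizontal segment the term `(e^{Re v} - e^{Re w}) cos (Im w)`, with `cos (Im w) ≥ 1 / 2`, beats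
the Lipschitz bound `C |w - v|` on the primitive of `p` as soon as `R ≥ 2C + 4`. Integrating
`e^{Re v - 2 Re w}` along the path then gives `|u w| ≤ K' e^{-Re w} = K' / |ζ|`.
-/

open Real

open Set

section Primitive

variable {E : Type*} [NormedAddCommGroup E] [NormedSpace ℂ E] {s t : Set ℝ} {f : ℂ → E}

theorem Complex.convex_reProdIm (hs : Convex ℝ s) (ht : Convex ℝ t) : Convex ℝ (s ×ℂ t) :=
  (hs.prod ht).linear_preimage equivRealProdLm.toLinearMap

theorem Complex.rectangle_subset_reProdIm [s.OrdConnected] [t.OrdConnected] {z w : ℂ}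
    (hz : z ∈ s ×ℂ t) (hw : w ∈ s ×ℂ t) : Rectangle z w ⊆ s ×ℂ t :=
  reProdIm_subset_iff'.2 <| .inl ⟨OrdConnected.uIcc_subset (s := s) ‹_› hz.1 hw.1,
    OrdConnected.uIcc_subset (s := t) ‹_› hz.2 hw.2⟩

theorem Complex.wedgeIntegral_add_wedgeIntegral_of_reProdIm [s.OrdConnected] [t.OrdConnected]
    (hf : DifferentiableOn ℂ f (s ×ℂ t)) {c z w : ℂ} (hc : c ∈ s ×ℂ t) (hz : z ∈ s ×ℂ t)
    (hw : w ∈ s ×ℂ t) :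
    wedgeIntegral c z f + wedgeIntegral z w f = wedgeIntegral c w f := by
  have horiz {x₁ x₂ y : ℝ} (h₁ : x₁ ∈ s) (h₂ : x₂ ∈ s) (hy : y ∈ t) :
      IntervalIntegrable (fun x : ℝ ↦ f (x + y * I)) MeasureTheory.volume x₁ x₂ :=
    (hf.continuousOn.comp (Continuous.continuousOn (by fun_prop)) fun (x : ℝ) hx ↦
      (⟨by simpa using OrdConnected.uIcc_subset (s := s) ‹_› h₁ h₂ hx, by simpa using hy⟩ :
        (x : ℂ) + (y : ℂ) * I ∈ s ×ℂ t)).intervalIntegrable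
  have vert {x y₁ y₂ : ℝ} (hx : x ∈ s) (h₁ : y₁ ∈ t) (h₂ : y₂ ∈ t) :
      IntervalIntegrable (fun y : ℝ ↦ f (x + y * I)) MeasureTheory.volume y₁ y₂ :=
    (hf.continuousOn.comp (Continuous.continuousOn (by fun_prop)) fun (y : ℝ) hy ↦
      (⟨by simpa using hx, by simpa using OrdConnected.uIcc_subset (s := t) ‹_› h₁ h₂ hy⟩ :
        (x : ℂ) + (y : ℂ) * I ∈ s ×ℂ t)).intervalIntegrable
  -- the two sides differ by the boundary integral of this rectangle
  have hrect := hf.isConservativeOn (z.re + c.im * I) (w.re + z.im * I)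
    (rectangle_subset_reProdIm (by simpa [mem_reProdIm] using And.intro hz.1 hc.2)
      (by simpa [mem_reProdIm] using And.intro hw.1 hz.2))
  rw [← add_eq_zero_iff_eq_neg, wedgeIntegral_add_wedgeIntegral_eq] at hrect
  simp only [add_re, ofReal_re, mul_re, I_re, mul_zero, ofReal_im, I_im, mul_one, sub_self,
    add_zero, add_im, mul_im, zero_add] at hrect
  simp only [wedgeIntegral]
  rw [← intervalIntegral.integral_add_adjacent_intervals (horiz hc.1 hz.1 hc.2)
      (horiz hz.1 hw.1 hc.2),
    ← intervalIntegral.integral_add_adjacent_intervals (vert hw.1 hc.2 hz.2) (vert hw.1 hz.2 hw.2)]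
  linear_combination (norm := module) -hrect

theorem Complex.hasDerivAt_wedgeIntegral_of_reProdIm [CompleteSpace E] [s.OrdConnected]
    [t.OrdConnected] (hs : IsOpen s) (ht : IsOpen t) (hf : DifferentiableOn ℂ f (s ×ℂ t))
    {c z : ℂ} (hc : c ∈ s ×ℂ t) (hz : z ∈ s ×ℂ t) :
    HasDerivAt (fun w ↦ wedgeIntegral c w f) (f z) z := by
  obtain ⟨r, hr, hball⟩ := Metric.isOpen_iff.mp (hs.reProdIm ht) z hz
  have hloc := (hf.mono hball).isConservativeOn.hasDerivAt_wedgeIntegral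
    (hf.mono hball).continuousOn (Metric.mem_ball_self hr)
  refine (hloc.const_add (wedgeIntegral c z f)).congr_of_eventuallyEq ?_
  filter_upwards [(hs.reProdIm ht).mem_nhds hz] with w hw
  exact (wedgeIntegral_add_wedgeIntegral_of_reProdIm hf hc hz hw).symm

end Primitive

theorem hasDerivAt_cexp_mul_of_hasDerivAt {F G : ℂ → ℂ} {p q w : ℂ} (hF : HasDerivAt F p w)
    (hG : HasDerivAt G (Complex.exp (-F w) * q) w) :
    HasDerivAt (fun v ↦ Complex.exp (F v) * G v) (p * (Complex.exp (F w) * G w) + q) w := by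
  refine (hF.cexp.mul hG).congr_deriv ?_
  rw [Complex.exp_neg, mul_inv_cancel_left₀ (Complex.exp_ne_zero _)]
  ring

theorem Real.exp_add_exp_mul_sub_le (t x : ℝ) : exp t + exp t * (x - t) ≤ exp x := by
  have h := mul_le_mul_of_nonneg_left (add_one_le_exp (x - t)) (exp_pos t).le
  rwa [← exp_add, add_sub_cancel, mul_add, mul_one, add_comm] at h

section Exponents

variable {a C x : ℝ}

theorem horizontal_exponent_le (hC : 0 ≤ C) (ha : 2 * C + 4 ≤ exp a) (hx : a < x) {t c : ℝ}
    (ht : t ∈ uIcc x (a + 1)) (hc : 1 / 2 ≤ c) (hc₁ : c ≤ 1) :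
    C * |x - t| + (exp t - exp x) * c ≤ exp (a + 1) + C + 2 * (t - x) := by
  have hat : a < t := (lt_min hx (lt_add_one a)).trans_le ht.1
  rcases le_or_gt t x with htx | hxt
  · -- `exp x - exp t ≥ exp a * (x - t) ≥ (2 * C + 4) * (x - t)` beats the Lipschitz term
    have h₁ := exp_add_exp_mul_sub_le t x
    have h₂ := exp_le_exp.2 hat.le
    have h₃ := exp_le_exp.2 htx
    rw [abs_of_nonneg (sub_nonneg.2 htx)]
    nlinarith [mul_le_mul_of_nonneg_right h₂ (sub_nonneg.2 htx), exp_pos (a + 1),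
      mul_le_mul_of_nonpos_left hc (sub_nonpos.2 h₃)]
  · have hta : t ≤ a + 1 := (le_max_iff.1 ht.2).resolve_left (not_le.2 hxt)
    rw [abs_of_neg (sub_neg.2 hxt)]
    nlinarith [exp_le_exp.2 hta, exp_le_exp.2 hxt.le, exp_pos x]

theorem vertical_exponent_le (hC : 0 ≤ C) (ha : 2 * C + 4 ≤ exp a) (hx : a < x) {d c c' : ℝ}
    (hd : d ≤ 1) (hc : 1 / 2 ≤ c) (hc' : c' ≤ 1) :
    C * (|x - (a + 1)| + d) + (exp (a + 1) * c' - exp x * c) ≤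
      exp (a + 1) + C + 2 * (a + 1 - x) := by
  have h₁ := exp_add_exp_mul_sub_le a x
  have h₂ : |x - (a + 1)| ≤ x - a + 1 := abs_le.2 ⟨by linarith, by linarith⟩
  nlinarith [mul_le_mul_of_nonneg_left hc' (exp_pos (a + 1)).le,
    mul_le_mul_of_nonneg_left hc (exp_pos x).le, mul_le_mul_of_nonneg_left h₂ hC,
    mul_le_mul_of_nonneg_right ha (sub_nonneg.2 hx.le)]

theorem abs_exp_add_one_sub_exp_le (hx : a < x) : |exp (a + 1) - exp x| ≤ exp 1 * exp x := by
  have h₁ : exp a ≤ exp x := exp_le_exp.2 hx.le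
  have h₂ : 1 ≤ exp 1 := one_le_exp zero_le_one
  rw [exp_add, abs_le]
  constructor <;> nlinarith [exp_pos a, exp_pos x, exp_pos 1]

end Exponents

/-- The image of `Usector (exp a)` under `ζ ↦ log (-ζ)`. -/
def logSector (a : ℝ) : Set ℂ := Ioi a ×ℂ Ioo (-(π / 8)) (π / 8)

section LogSector

open Complex (I)

variable {a C : ℝ} {w : ℂ} {t : ℝ}

theorem convex_logSector (a : ℝ) : Convex ℝ (logSector a) :=
  Complex.convex_reProdIm (convex_Ioi a) (convex_Ioo _ _)

theorem ofReal_mem_logSector : ((a + 1 : ℝ) : ℂ) ∈ logSector a := by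
  simp [logSector, Complex.mem_reProdIm, pi_pos]

theorem lt_re_of_mem_logSector (hw : w ∈ logSector a) : a < w.re :=
  hw.1

theorem abs_im_lt_of_mem_logSector (hw : w ∈ logSector a) : |w.im| < π / 8 :=
  abs_lt.2 hw.2

theorem half_le_cos_im_of_mem_logSector (hw : w ∈ logSector a) : 1 / 2 ≤ cos w.im := by
  have h := abs_im_lt_of_mem_logSector hw
  have h₁ : w.im ^ 2 ≤ 1 := by nlinarith [abs_nonneg w.im, sq_abs w.im, pi_lt_four]
  nlinarith [one_sub_sq_div_two_le_cos (x := w.im)]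

theorem horizontal_mem_logSector (hw : w ∈ logSector a) (ht : t ∈ uIcc w.re (a + 1)) :
    (t : ℂ) + w.im * I ∈ logSector a := by
  refine ⟨?_, by simpa using hw.2⟩
  simpa using (lt_min (lt_re_of_mem_logSector hw) (lt_add_one a)).trans_le ht.1

theorem vertical_mem_logSector (hw : w ∈ logSector a) (ht : t ∈ uIcc w.im 0) :
    ((a + 1 : ℝ) : ℂ) + t * I ∈ logSector a := by
  refine ⟨by simp, ?_⟩
  simpa using ordConnected_Ioo.uIcc_subset hw.2 ⟨by linarith [pi_pos], by positivity⟩ ht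

section Path

variable {F : ℂ → ℂ}

theorem re_sub_horizontal_le (hC : 0 ≤ C) (ha : 2 * C + 4 ≤ exp a)
    (hF : ∀ w ∈ logSector a, ∀ v ∈ logSector a,
      (F w - F v).re ≤ C * ‖w - v‖ + (Complex.exp v - Complex.exp w).re)
    (hw : w ∈ logSector a) (ht : t ∈ uIcc w.re (a + 1)) :
    (F w - F (t + w.im * I)).re ≤ exp (a + 1) + C + 2 * (t - w.re) := by
  have hdist : w - (t + w.im * I) = ((w.re - t : ℝ) : ℂ) := Complex.ext (by simp) (by simp)
  calc _ ≤ C * ‖w - (t + w.im * I)‖ + (Complex.exp (t + w.im * I) - Complex.exp w).re :=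
        hF w hw _ (horizontal_mem_logSector hw ht)
    _ = C * |w.re - t| + (exp t - exp w.re) * cos w.im := by
        rw [hdist, Complex.norm_real, Real.norm_eq_abs]
        simp [Complex.exp_re, sub_mul]
    _ ≤ _ := horizontal_exponent_le hC ha (lt_re_of_mem_logSector hw) ht
        (half_le_cos_im_of_mem_logSector hw) (cos_le_one _)

theorem re_sub_vertical_le (hC : 0 ≤ C) (ha : 2 * C + 4 ≤ exp a)
    (hF : ∀ w ∈ logSector a, ∀ v ∈ logSector a,
      (F w - F v).re ≤ C * ‖w - v‖ + (Complex.exp v - Complex.exp w).re)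
    (hw : w ∈ logSector a) (ht : t ∈ uIcc w.im 0) :
    (F w - F ((a + 1 : ℝ) + t * I)).re ≤ exp (a + 1) + C + 2 * (a + 1 - w.re) := by
  have hv := vertical_mem_logSector hw ht
  have hvt : |t| < π / 8 := by simpa using abs_im_lt_of_mem_logSector hv
  have hdist := Complex.norm_le_abs_re_add_abs_im (w - ((a + 1 : ℝ) + t * I))
  calc _ ≤ C * ‖w - ((a + 1 : ℝ) + t * I)‖
          + (Complex.exp ((a + 1 : ℝ) + t * I) - Complex.exp w).re := hF w hw _ hv
    _ ≤ C * (|w.re - (a + 1)| + |w.im - t|) + (exp (a + 1) * cos t - exp w.re * cos w.im) := by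
        refine add_le_add (mul_le_mul_of_nonneg_left (hdist.trans_eq (by simp)) hC) ?_
        simp [Complex.exp_re]
    _ ≤ _ := by
        refine vertical_exponent_le hC ha (lt_re_of_mem_logSector hw) ?_
          (half_le_cos_im_of_mem_logSector hw) (cos_le_one _)
        linarith [abs_sub w.im t, abs_im_lt_of_mem_logSector hw, pi_lt_four]

theorem norm_exp_mul_exp_neg_mul_le {q : ℂ → ℂ} {v : ℂ} {K : ℝ}
    (hF : (F w - F v).re ≤ K + 2 * (v.re - w.re)) (hq : ‖q v‖ ≤ C * exp (-v.re)) :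
    ‖Complex.exp (F w) * (Complex.exp (-F v) * q v)‖ ≤
      C * exp K * exp (-2 * w.re) * exp v.re := by
  rw [← mul_assoc, ← Complex.exp_add, norm_mul, Complex.norm_exp, ← sub_eq_add_neg]
  calc exp (F w - F v).re * ‖q v‖ ≤ exp (K + 2 * (v.re - w.re)) * (C * exp (-v.re)) := by
        gcongr
    _ = C * exp K * exp (-2 * w.re) * exp v.re := by
        rw [mul_left_comm, ← exp_add, mul_assoc, mul_assoc, ← exp_add, ← exp_add]
        ring_nf

theorem norm_exp_mul_wedgeIntegral_le {q : ℂ → ℂ} (hC : 0 ≤ C) (ha : 2 * C + 4 ≤ exp a)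
    (hF : ∀ w ∈ logSector a, ∀ v ∈ logSector a,
      (F w - F v).re ≤ C * ‖w - v‖ + (Complex.exp v - Complex.exp w).re)
    (hq : ∀ v ∈ logSector a, ‖q v‖ ≤ C * exp (-v.re)) (hw : w ∈ logSector a) :
    ‖Complex.exp (F w) * Complex.wedgeIntegral w ((a + 1 : ℝ) : ℂ)
      (fun v ↦ Complex.exp (-F v) * q v)‖ ≤
      2 * exp 1 * (C * exp (exp (a + 1) + C)) * exp (-w.re) := by
  set M := C * exp (exp (a + 1) + C)
  have horiz (t : ℝ) (ht : t ∈ uIcc w.re (a + 1)) :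
      ‖Complex.exp (F w) * (Complex.exp (-F (t + w.im * I)) * q (t + w.im * I))‖ ≤
        M * exp (-2 * w.re) * exp t :=
    (norm_exp_mul_exp_neg_mul_le (by simpa using re_sub_horizontal_le hC ha hF hw ht)
      (hq _ (horizontal_mem_logSector hw ht))).trans_eq (by simp [M])
  have vert (t : ℝ) (ht : t ∈ uIcc w.im 0) :
      ‖Complex.exp (F w) * (Complex.exp (-F ((a + 1 : ℝ) + t * I)) * q ((a + 1 : ℝ) + t * I))‖ ≤
        M * exp (-2 * w.re) * exp (a + 1) :=
    (norm_exp_mul_exp_neg_mul_le (by simpa using re_sub_vertical_le hC ha hF hw ht)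
      (hq _ (vertical_mem_logSector hw ht))).trans_eq (by simp [M])
  simp only [Complex.wedgeIntegral, Complex.ofReal_re, Complex.ofReal_im, mul_add,
    ← intervalIntegral.integral_const_mul, mul_smul_comm]
  have horiz_int := intervalIntegral.norm_integral_le_abs_of_norm_le (μ := MeasureTheory.volume)
    (MeasureTheory.ae_restrict_of_forall_mem measurableSet_uIoc
      fun t ht ↦ horiz t (uIoc_subset_uIcc ht))
    ((continuous_const.mul continuous_exp).intervalIntegrable _ _)
  have vert_int := intervalIntegral.norm_integral_le_of_norm_le_const
    fun t ht ↦ vert t (uIoc_subset_uIcc ht)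
  rw [intervalIntegral.integral_const_mul (M * exp (-2 * w.re)) exp, integral_exp, abs_mul,
    abs_of_nonneg (by positivity)] at horiz_int
  have hlen : exp (a + 1) * |0 - w.im| ≤ exp 1 * exp w.re := by
    have h : |w.im| ≤ 1 := by linarith [abs_im_lt_of_mem_logSector hw, pi_lt_four]
    rw [zero_sub, abs_neg, exp_add, mul_comm (exp a)]
    calc exp 1 * exp a * |w.im| ≤ exp 1 * exp w.re * 1 := by
          gcongr
          exact (lt_re_of_mem_logSector hw).le
      _ = _ := mul_one _
  calc _ ≤ _ := norm_add_le _ _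
    _ ≤ M * exp (-2 * w.re) * (exp 1 * exp w.re) + M * exp (-2 * w.re) * (exp 1 * exp w.re) := by
        rw [norm_smul, Complex.norm_I, one_mul]
        gcongr
        · exact horiz_int.trans
            (by gcongr; exact abs_exp_add_one_sub_exp_le (lt_re_of_mem_logSector hw))
        · exact vert_int.trans (by rw [mul_assoc]; gcongr)
    _ = 2 * exp 1 * M * exp (-w.re) := by
        rw [show exp (-w.re) = exp (-2 * w.re) * exp w.re by rw [← exp_add]; ring_nf]
        ring

end Path

end LogSector

theorem exists_solution_logSector {a C : ℝ} {p q : ℂ → ℂ} (hC : 0 < C) (ha : 2 * C + 4 ≤ exp a)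
    (hp : DifferentiableOn ℂ p (logSector a)) (hq : DifferentiableOn ℂ q (logSector a))
    (hp_le : ∀ w ∈ logSector a, ‖p w‖ ≤ C) (hq_le : ∀ w ∈ logSector a, ‖q w‖ ≤ C * exp (-w.re)) :
    ∃ u : ℂ → ℂ, ∃ K > 0, ∀ w ∈ logSector a,
      HasDerivAt u ((p w - Complex.exp w) * u w + q w) w ∧ ‖u w‖ ≤ K * exp (-w.re) := by
  set c : ℂ := ((a + 1 : ℝ) : ℂ)
  have hc : c ∈ logSector a := ofReal_mem_logSector
  have primitive {f : ℂ → ℂ} (hf : DifferentiableOn ℂ f (logSector a)) {w : ℂ}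
      (hw : w ∈ logSector a) : HasDerivAt (fun v ↦ Complex.wedgeIntegral c v f) (f w) w :=
    Complex.hasDerivAt_wedgeIntegral_of_reProdIm isOpen_Ioi isOpen_Ioo hf hc hw
  set S := fun v ↦ Complex.wedgeIntegral c v p
  set F := fun v ↦ S v - Complex.exp v
  have hF : ∀ w ∈ logSector a, HasDerivAt F (p w - Complex.exp w) w := fun w hw ↦
    (primitive hp hw).sub (Complex.hasDerivAt_exp w)
  set g := fun v ↦ Complex.exp (-F v) * q v
  have hg : DifferentiableOn ℂ g (logSector a) := fun w hw ↦
    (hF w hw).differentiableAt.differentiableWithinAt.neg.cexp.mul (hq w hw)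
  have hF_re : ∀ w ∈ logSector a, ∀ v ∈ logSector a,
      (F w - F v).re ≤ C * ‖w - v‖ + (Complex.exp v - Complex.exp w).re := by
    intro w hw v hv
    have hS := (convex_logSector a).norm_image_sub_le_of_norm_hasDerivWithin_le
      (fun z hz ↦ (primitive hp hz).hasDerivWithinAt) hp_le hv hw
    calc (F w - F v).re = (S w - S v).re + (Complex.exp v - Complex.exp w).re := by
          simp only [F, Complex.sub_re]; ring
      _ ≤ C * ‖w - v‖ + (Complex.exp v - Complex.exp w).re := by
          gcongr; exact (Complex.re_le_norm _).trans hS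
  refine ⟨fun w ↦ Complex.exp (F w) * Complex.wedgeIntegral c w g,
    2 * exp 1 * (C * exp (exp (a + 1) + C)), by positivity, fun w hw ↦
    ⟨hasDerivAt_cexp_mul_of_hasDerivAt (hF w hw) (primitive hg hw), ?_⟩⟩
  show ‖Complex.exp (F w) * Complex.wedgeIntegral c w g‖ ≤ _
  rw [hg.isConservativeOn c w (Complex.rectangle_subset_reProdIm hc hw), mul_neg, norm_neg]
  exact norm_exp_mul_wedgeIntegral_le hC.le ha hF_re hq_le hw

section Coordinates

variable {a : ℝ} {ζ w : ℂ}

theorem ne_zero_of_mem_Usector (hζ : ζ ∈ Usector (exp a)) : ζ ≠ 0 :=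
  norm_pos_iff.1 ((exp_pos a).trans hζ.1)

theorem neg_mem_slitPlane_of_mem_Usector (hζ : ζ ∈ Usector (exp a)) : -ζ ∈ Complex.slitPlane := by
  refine Complex.mem_slitPlane_iff_arg.2 ⟨fun h ↦ ?_, neg_ne_zero.2 (ne_zero_of_mem_Usector hζ)⟩
  have := hζ.2
  rw [h, abs_of_pos pi_pos] at this
  linarith [pi_pos]

theorem log_neg_mem_logSector (hζ : ζ ∈ Usector (exp a)) : Complex.log (-ζ) ∈ logSector a := by
  refine ⟨?_, by simpa [Complex.log_im] using abs_lt.1 hζ.2⟩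
  simpa [Complex.log_re] using
    (lt_log_iff_exp_lt (norm_pos_iff.2 (ne_zero_of_mem_Usector hζ))).2 hζ.1

theorem neg_exp_mem_Usector (hw : w ∈ logSector a) : -Complex.exp w ∈ Usector (exp a) := by
  refine ⟨by simpa [Complex.norm_exp] using (lt_re_of_mem_logSector hw), ?_⟩
  have him := abs_im_lt_of_mem_logSector hw
  rwa [neg_neg, Complex.arg_exp, (toIocMod_eq_self _).2]
  constructor <;> linarith [abs_lt.1 him, pi_pos]

theorem HasDerivAt.comp_log_neg {u : ℂ → ℂ} {d : ℂ} (hζ : -ζ ∈ Complex.slitPlane)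
    (hu : HasDerivAt u d (Complex.log (-ζ))) :
    HasDerivAt (fun ζ ↦ u (Complex.log (-ζ))) (d * ζ⁻¹) ζ := by
  refine (hu.comp ζ ((Complex.hasDerivAt_log hζ).comp ζ (hasDerivAt_neg ζ))).congr_deriv ?_
  rw [inv_neg]
  ring

theorem norm_neg_exp_mul_le {f : ℂ → ℂ} {C : ℝ} {n : ℕ}
    (hf : ∀ ζ ∈ Usector (exp a), ‖f ζ‖ ≤ C / ‖ζ‖ ^ (n + 1)) (hw : w ∈ logSector a) :
    ‖-Complex.exp w * f (-Complex.exp w)‖ ≤ C * exp (-w.re) ^ n := by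
  have h := hf _ (neg_exp_mem_Usector hw)
  rw [norm_neg, Complex.norm_exp] at h
  rw [norm_mul, norm_neg, Complex.norm_exp, exp_neg, inv_pow, ← div_eq_mul_inv]
  calc exp w.re * ‖f (-Complex.exp w)‖ ≤ exp w.re * (C / exp w.re ^ (n + 1)) := by gcongr
    _ = C / exp w.re ^ n := by field_simp; ring

end Coordinates

/-- For `R` large, the ODE `σ'(y) − (1 + s(y))σ(y) = τ(y)` with `s, τ` holomorphic
on a neighborhood of the closure of `U_R`, `|s(y)| ≤ C/|y|`, `|τ(y)| ≤ C/|y|²`,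
has a holomorphic solution `σ` on `U_R` with `|σ(y)| ≤ C'/|y|`. -/
theorem ode_solution_estimate (C : ℝ) (hC : 0 < C) :
    ∃ R₀ : ℝ, ∀ R : ℝ, R₀ ≤ R → ∀ s τ : ℂ → ℂ,
      (∃ V : Set ℂ, IsOpen V ∧ closure (Usector R) ⊆ V ∧
        DifferentiableOn ℂ s V ∧ DifferentiableOn ℂ τ V) →
      (∀ y ∈ Usector R, ‖s y‖ ≤ C / ‖y‖) →
      (∀ y ∈ Usector R, ‖τ y‖ ≤ C / ‖y‖ ^ 2) →
      ∃ σ : ℂ → ℂ, ∃ C' > (0 : ℝ),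
        (∀ y ∈ Usector R, HasDerivAt σ ((1 + s y) * σ y + τ y) y) ∧
        ∀ y ∈ Usector R, ‖σ y‖ ≤ C' / ‖y‖ := by
  refine ⟨2 * C + 4, ?_⟩
  rintro R hR s τ ⟨V, -, hUV, hs, hτ⟩ hs_le hτ_le
  obtain ⟨a, rfl⟩ : ∃ a, exp a = R := ⟨log R, exp_log (by linarith)⟩
  have hdiff {f : ℂ → ℂ} (hf : DifferentiableOn ℂ f V) :
      DifferentiableOn ℂ (fun w ↦ -Complex.exp w * f (-Complex.exp w)) (logSector a) :=
    Complex.differentiable_exp.neg.differentiableOn.mul <|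
      (hf.mono (subset_closure.trans hUV)).comp Complex.differentiable_exp.neg.differentiableOn
        fun _ ↦ neg_exp_mem_Usector
  obtain ⟨u, K, hK, hu⟩ := exists_solution_logSector hC hR (hdiff hs) (hdiff hτ)
    (fun w hw ↦ by simpa using norm_neg_exp_mul_le (n := 0) (by simpa using hs_le) hw)
    (fun w hw ↦ by simpa using norm_neg_exp_mul_le (n := 1) hτ_le hw)
  refine ⟨fun ζ ↦ u (Complex.log (-ζ)), K, hK, fun ζ hζ ↦ ?_, fun ζ hζ ↦ ?_⟩
  · have hexp : Complex.exp (Complex.log (-ζ)) = -ζ :=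
      Complex.exp_log (neg_ne_zero.2 (ne_zero_of_mem_Usector hζ))
    convert (hu _ (log_neg_mem_logSector hζ)).1.comp_log_neg (neg_mem_slitPlane_of_mem_Usector hζ)
      using 1
    rw [hexp, neg_neg]
    field_simp [ne_zero_of_mem_Usector hζ]
    ring
  · have h := (hu _ (log_neg_mem_logSector hζ)).2
    rwa [Complex.log_re, norm_neg, exp_neg, exp_log (norm_pos_iff.2 (ne_zero_of_mem_Usector hζ)),
      ← div_eq_mul_inv] at h
end

section
/- Let U_R = {ζ : |ζ| > R, |Arg ζ − π| < π/8} and suppose μ(x, y) = x + r·log x + s·log y + x·β(y) + η(x, y) where r, s ∈ ℂ are constants, β is holomorphic with |β(y)| ≤ C/|y| on U_R, and η is holomorphic and bounded by M on U_R × U_R. Then for R sufficiently large (depending on r, C, M), the map x ↦ μ(x, y) is injective on U_R for each fixed y ∈ U_R. -/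
open Real

/-!
Write `μ(x) = x + g(x)`. On `U_R` the point `-x` lies in the half-plane `Re > R cos(π/8)`,
where `log` is `1/(R cos(π/8))`-Lipschitz by the mean value theorem, and `|β(y)| ≤ C/R`; so `g` is
Lipschitz on `U_R` with constant `|r|/(R cos(π/8)) + C/R + ε < 1`, and a contraction perturbation
of the identity is injective.
-/

lemma Set.injOn_of_norm_sub_sub_le {E : Type*} [NormedAddCommGroup E] {f : E → E}
    {s : Set E} {K : ℝ} (hK : K < 1)
    (hf : ∀ x₁ ∈ s, ∀ x₂ ∈ s, ‖(f x₁ - x₁) - (f x₂ - x₂)‖ ≤ K * ‖x₁ - x₂‖) :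
    Set.InjOn f s := by
  intro x₁ hx₁ x₂ hx₂ heq
  have hle : ‖x₁ - x₂‖ ≤ K * ‖x₁ - x₂‖ := by
    simpa [heq, norm_sub_rev x₁ x₂] using hf x₁ hx₁ x₂ hx₂
  have hzero : ‖x₁ - x₂‖ = 0 := by nlinarith [norm_nonneg (x₁ - x₂)]
  exact sub_eq_zero.mp (norm_eq_zero.mp hzero)

lemma Complex.norm_mul_cos_le_re {z : ℂ} {θ : ℝ} (hθ : θ ≤ π) (harg : |z.arg| ≤ θ) :
    ‖z‖ * Real.cos θ ≤ z.re := by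
  rw [← Complex.norm_mul_cos_arg z, ← Real.cos_abs z.arg]
  exact mul_le_mul_of_nonneg_left
    (Real.cos_le_cos_of_nonneg_of_le_pi (abs_nonneg _) hθ harg) (norm_nonneg z)

lemma Complex.norm_log_sub_log_le {c : ℝ} (hc : 0 < c) {a b : ℂ} (ha : c < a.re)
    (hb : c < b.re) : ‖Complex.log a - Complex.log b‖ ≤ ‖a - b‖ / c := by
  have hderiv : ∀ z ∈ {z : ℂ | c < z.re},
      HasDerivWithinAt Complex.log z⁻¹ {z : ℂ | c < z.re} z := fun z hz =>
    (Complex.hasDerivAt_log (Or.inl (hc.trans hz))).hasDerivWithinAt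
  have hbound : ∀ z ∈ {z : ℂ | c < z.re}, ‖z⁻¹‖ ≤ 1 / c := fun z hz => by
    rw [norm_inv, one_div]
    exact inv_anti₀ hc ((le_of_lt hz).trans (Complex.re_le_norm z))
  simpa [div_eq_inv_mul] using
    (convex_halfSpace_re_gt c).norm_image_sub_le_of_norm_hasDerivWithin_le hderiv hbound hb ha

lemma Real.cos_pi_div_eight_pos : 0 < Real.cos (π / 8) := by
  rw [Real.cos_pi_div_eight]; positivity

lemma lt_re_neg_of_mem_Usector {R : ℝ} {x : ℂ} (hx : x ∈ Usector R) :
    R * Real.cos (π / 8) < (-x).re := by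
  calc R * Real.cos (π / 8) < ‖-x‖ * Real.cos (π / 8) := by
        rw [norm_neg]; exact mul_lt_mul_of_pos_right hx.1 Real.cos_pi_div_eight_pos
    _ ≤ (-x).re := Complex.norm_mul_cos_le_re (by linarith [Real.pi_pos]) hx.2.le

lemma norm_sectorLog_sub_le {R : ℝ} (hR : 0 < R) {x₁ x₂ : ℂ} (hx₁ : x₁ ∈ Usector R)
    (hx₂ : x₂ ∈ Usector R) :
    ‖sectorLog x₁ - sectorLog x₂‖ ≤ ‖x₁ - x₂‖ / (R * Real.cos (π / 8)) := by
  simpa only [sectorLog, neg_sub_neg, norm_sub_rev x₂ x₁] using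
    Complex.norm_log_sub_log_le (mul_pos hR Real.cos_pi_div_eight_pos)
      (lt_re_neg_of_mem_Usector hx₁) (lt_re_neg_of_mem_Usector hx₂)

theorem abel_fatou_injective_general (R : ℝ) (hR : 0 < R) (r s : ℂ) (C ε : ℝ)
    (β : ℂ → ℂ) (η : ℂ × ℂ → ℂ) (y : ℂ) (hy : y ∈ Usector R)
    (hβ : ‖β y‖ ≤ C / ‖y‖)
    (hηdiff : ∀ x₁ ∈ Usector R, ∀ x₂ ∈ Usector R,
      ‖η (x₁, y) - η (x₂, y)‖ ≤ ε * ‖x₁ - x₂‖)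
    (hsmall : ‖r‖ / (R * Real.cos (π / 8)) + C / R + ε < 1) :
    Set.InjOn (fun x : ℂ => x + r * sectorLog x + s * sectorLog y + x * β y + η (x, y))
      (Usector R) := by
  have hC : 0 ≤ C := by
    simpa using (le_div_iff₀ (hR.trans hy.1)).mp ((norm_nonneg _).trans hβ)
  have hβR : ‖β y‖ ≤ C / R := hβ.trans (div_le_div_of_nonneg_left hC hR hy.1.le)
  refine Set.injOn_of_norm_sub_sub_le hsmall fun x₁ hx₁ x₂ hx₂ => ?_
  calc _ = ‖r * (sectorLog x₁ - sectorLog x₂) + (x₁ - x₂) * β y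
          + (η (x₁, y) - η (x₂, y))‖ := by congr 1; ring
    _ ≤ ‖r‖ * (‖x₁ - x₂‖ / (R * Real.cos (π / 8))) + ‖x₁ - x₂‖ * (C / R)
          + ε * ‖x₁ - x₂‖ := by
      refine (norm_add₃_le ..).trans ?_
      rw [norm_mul, norm_mul]
      gcongr
      exacts [norm_sectorLog_sub_le hR hx₁ hx₂, hηdiff x₁ hx₁ x₂ hx₂]
    _ = _ := by ring

/-- Quantitative injectivity of the Abel–Fatou coordinate in the first variable:
if `μ(x,y) = x + r log x + s log y + xβ(y) + η(x,y)` with `|β(y)| ≤ C/|y|`,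
the η-difference quotient bounded by `ε`, `η` bounded by `M`, and
`|r|/(R cos(π/8)) + C/R + ε < 1`, then `x ↦ μ(x,y)` is injective on `U_R`. -/
theorem abel_fatou_injective (R : ℝ) (hR : 0 < R) (r s : ℂ) (C M ε : ℝ)
    (β : ℂ → ℂ) (η : ℂ × ℂ → ℂ) (y : ℂ) (hy : y ∈ Usector R)
    (hβ : ‖β y‖ ≤ C / ‖y‖)
    (hηM : ∀ p ∈ (Usector R) ×ˢ (Usector R), ‖η p‖ ≤ M)
    (hηdiff : ∀ x₁ ∈ Usector R, ∀ x₂ ∈ Usector R,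
      ‖η (x₁, y) - η (x₂, y)‖ ≤ ε * ‖x₁ - x₂‖)
    (hsmall : ‖r‖ / (R * Real.cos (π / 8)) + C / R + ε < 1) :
    Set.InjOn (fun x : ℂ => x + r * sectorLog x + s * sectorLog y + x * β y + η (x, y))
      (Usector R) :=
  abel_fatou_injective_general R hR r s C ε β η y hy hβ hηdiff hsmall
end

section
/- Let X be a topological space, F: X → X a homeomorphism, D ⊂ X open with F(D) ⊂ D, and C ⊂ X with F(C) ⊂ C, C ∩ D = ∅, and F^K(C) ⊂ ∂D for some K ≥ 0. Set Ω = ⋃_{n≥0} F^{−n}(D) and Γ = ⋃_{n≥0} F^{−n}(C). Then Γ ⊂ ∂Ω. -/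
/-!
Every point of `Γ` eventually lands in `C` and stays there, while every point of `Ω` eventually
lands in `D` and stays there; since `C` and `D` are disjoint, `Γ` misses `Ω`. On the other hand a
point `x` with `Fⁿ x ∈ C` has `F^{K+n} x ∈ ∂D ⊆ closure D`, and pulling back along the
homeomorphism `F^{K+n}` puts `x` in the closure of `F^{-(K+n)}(D) ⊆ Ω`. A point of the closure of
`Ω` outside `Ω` lies on its frontier.
-/

open Set Function

theorem IsOpenMap.iterate {X : Type*} [TopologicalSpace X] {f : X → X} (hf : IsOpenMap f) :
    ∀ n, IsOpenMap f^[n]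
  | 0 => IsOpenMap.id
  | n + 1 => (hf.iterate n).comp hf

theorem Set.MapsTo.iterate_mem_of_le {α : Type*} {f : α → α} {s : Set α} (hs : MapsTo f s s)
    {m n : ℕ} (hmn : m ≤ n) {x : α} (hx : f^[m] x ∈ s) : f^[n] x ∈ s := by
  rw [← Nat.sub_add_cancel hmn, iterate_add_apply]
  exact hs.iterate (n - m) hx

theorem disjoint_iUnion_preimage_iterate {α : Type*} {f : α → α} {s t : Set α}
    (hs : MapsTo f s s) (ht : MapsTo f t t) (hst : Disjoint s t) :
    Disjoint (⋃ n, f^[n] ⁻¹' s) (⋃ n, f^[n] ⁻¹' t) := by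
  simp only [disjoint_iUnion_left, disjoint_iUnion_right]
  intro n m
  wlog hmn : m ≤ n generalizing s t m n
  · exact (this ht hs hst.symm m n (le_of_not_ge hmn)).symm
  exact disjoint_left.mpr fun x hxs hxt => disjoint_left.mp hst (hs.iterate_mem_of_le hmn hxs) hxt

theorem iUnion_preimage_iterate_subset_closure {X : Type*} [TopologicalSpace X] {f : X → X}
    (hf : IsOpenMap f) (hfc : Continuous f) {C D : Set X} (K : ℕ)
    (hK : MapsTo f^[K] C (closure D)) :
    ⋃ n, f^[n] ⁻¹' C ⊆ closure (⋃ n, f^[n] ⁻¹' D) := by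
  refine iUnion_subset fun n x hx => closure_mono (subset_iUnion (fun m => f^[m] ⁻¹' D) (K + n)) ?_
  rw [← (hf.iterate _).preimage_closure_eq_closure_preimage (hfc.iterate _), mem_preimage,
    iterate_add_apply]
  exact hK hx

theorem subset_frontier_of_disjoint_of_subset_closure {X : Type*} [TopologicalSpace X]
    {s t : Set X} (hst : Disjoint s t) (hs : s ⊆ closure t) : s ⊆ frontier t := by
  rw [← closure_sdiff_interior]
  exact fun x hx => ⟨hs hx, fun hxt => disjoint_left.mp hst hx (interior_subset hxt)⟩

theorem saturation_subset_frontier_general {X : Type*} [TopologicalSpace X]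
    (F : X ≃ₜ X) (D C : Set X)
    (hFD : (⇑F) '' D ⊆ D) (hFC : (⇑F) '' C ⊆ C) (hdisj : C ∩ D = ∅)
    (K : ℕ) (hK : (⇑F)^[K] '' C ⊆ frontier D) :
    (⋃ n : ℕ, (⇑F)^[n] ⁻¹' C) ⊆ frontier (⋃ n : ℕ, (⇑F)^[n] ⁻¹' D) :=
  subset_frontier_of_disjoint_of_subset_closure
    (disjoint_iUnion_preimage_iterate (mapsTo_iff_image_subset.mpr hFC)
      (mapsTo_iff_image_subset.mpr hFD) (disjoint_iff_inter_eq_empty.mpr hdisj))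
    (iUnion_preimage_iterate_subset_closure F.isOpenMap F.continuous K
      (mapsTo_iff_image_subset.mpr (hK.trans frontier_subset_closure)))

/-- If `F` is a homeomorphism, `D` open and forward invariant, `C` forward
invariant, disjoint from `D`, with `F^K(C) ⊂ ∂D`, then
`Γ = ⋃ F^{−n}(C)` is contained in the boundary of `Ω = ⋃ F^{−n}(D)`. -/
theorem saturation_subset_frontier {X : Type*} [TopologicalSpace X]
    (F : X ≃ₜ X) (D C : Set X) (hDopen : IsOpen D)
    (hFD : (⇑F) '' D ⊆ D) (hFC : (⇑F) '' C ⊆ C) (hdisj : C ∩ D = ∅)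
    (K : ℕ) (hK : (⇑F)^[K] '' C ⊆ frontier D) :
    (⋃ n : ℕ, (⇑F)^[n] ⁻¹' C) ⊆ frontier (⋃ n : ℕ, (⇑F)^[n] ⁻¹' D) :=
  saturation_subset_frontier_general F D C hFD hFC hdisj K hK
end

section
/- Suppose t = x + r log x + s log y + xβ(y) + η(x,y) where x, y ∈ U_R, |y| < |x|, β(y) = 1/y + O(1/y²) (i.e. |β(y) − 1/y| ≤ C/|y|²) and |η| ≤ M. Then |1/x − 1/t − β(y)/x| ≤ C'( (log|x|)/|x|² + 1/(|x||y|²) ) for a constant C' and all sufficiently large R; in particular 1/x − 1/t = 1/(xy)·(1 + O(1/|y|)) + O(|log x|/|x|²). -/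
set_option maxHeartbeats 1000000

open Real

lemma norm_sectorLog_le {x : ℂ} (hx : Real.exp π ≤ ‖x‖) :
    ‖sectorLog x‖ ≤ 2 * Real.log ‖x‖ := by
  have hx0 : (0:ℝ) < ‖x‖ := lt_of_lt_of_le (Real.exp_pos π) hx
  have hlog : π ≤ Real.log ‖x‖ := by
    rw [← Real.log_exp π]
    exact Real.log_le_log (Real.exp_pos π) hx
  have h1 : ‖sectorLog x‖ ≤ |(Complex.log (-x)).re| + |(Complex.log (-x)).im| := by
    simpa [sectorLog] using Complex.norm_le_abs_re_add_abs_im (Complex.log (-x))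
  have h2 : |(Complex.log (-x)).re| = |Real.log ‖x‖| := by
    rw [Complex.log_re]
    congr 1
    rw [norm_neg]
  have h3 : |(Complex.log (-x)).im| ≤ π := by
    rw [Complex.log_im]; exact Complex.abs_arg_le_pi _
  have h4 : |Real.log ‖x‖| = Real.log ‖x‖ := abs_of_nonneg (le_trans Real.pi_pos.le hlog)
  calc ‖sectorLog x‖ ≤ |Real.log ‖x‖| + π := by rw [← h2]; linarith [h1, h3]
    _ ≤ 2 * Real.log ‖x‖ := by rw [h4]; linarith

lemma log_le_of_sq {a X : ℝ} (ha : 0 ≤ a) (hX : (a)^2 ≤ X) (hX1 : 1 ≤ X) :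
    Real.log X ≤ 2 * Real.sqrt X := by
  have h0 : (0:ℝ) < X := by linarith
  have := Real.log_le_sub_one_of_pos (Real.sqrt_pos.2 h0)
  have h1 : Real.log (Real.sqrt X) ≤ Real.sqrt X := by linarith
  have h2 := Real.log_sqrt h0.le
  linarith

/-- Key estimate for the fiber coordinate: if
`t = x + r log x + s log y + xβ(y) + η` with `x, y ∈ U_R`, `|y| < |x|`,
`β(y) = 1/y + O(1/y²)` and `|η| ≤ M`, then
`|1/x − 1/t − β(y)/x| ≤ C'(log|x|/|x|² + 1/(|x||y|²))`. -/
theorem fiber_coordinate_estimate (r s : ℂ) (C M : ℝ) (hC : 0 < C) (hM : 0 < M) :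
    ∃ R₀ C' : ℝ, 0 < C' ∧ ∀ R : ℝ, R₀ ≤ R → ∀ x y t βy η : ℂ,
      x ∈ Usector R → y ∈ Usector R → ‖y‖ < ‖x‖ →
      ‖βy - 1 / y‖ ≤ C / ‖y‖ ^ 2 → ‖η‖ ≤ M →
      t = x + r * sectorLog x + s * sectorLog y + x * βy + η →
      ‖1 / x - 1 / t - βy / x‖ ≤
        C' * (Real.log ‖x‖ / ‖x‖ ^ 2 + 1 / (‖x‖ * ‖y‖ ^ 2)) := by
  set K : ℝ := ‖r‖ + ‖s‖ with hK
  have hK0 : 0 ≤ K := by positivity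
  refine ⟨max (max (Real.exp π) ((24 * (K + 1))^2)) (max (6 * (1 + C)) (6 * M)),
    2 * (2 * K + M) * (2 + C) + 2 * (1 + C)^2, by positivity, ?_⟩
  intro R hR x y t βy η hxU hyU hyx hβ hη ht
  obtain ⟨hxR, -⟩ := hxU
  obtain ⟨hyR, -⟩ := hyU
  have hRe : Real.exp π ≤ R := le_trans (le_trans (le_max_left _ _) (le_max_left _ _)) hR
  have hRsq : (24 * (K + 1))^2 ≤ R := le_trans (le_trans (le_max_right _ _) (le_max_left _ _)) hR
  have hRC : 6 * (1 + C) ≤ R := le_trans (le_trans (le_max_left _ _) (le_max_right _ _)) hR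
  have hRM : 6 * M ≤ R := le_trans (le_trans (le_max_right _ _) (le_max_right _ _)) hR
  set X : ℝ := ‖x‖ with hXdef
  set Y : ℝ := ‖y‖ with hYdef
  have hXe : Real.exp π ≤ X := le_trans hRe hxR.le
  have hYe : Real.exp π ≤ Y := le_trans hRe hyR.le
  have hepi : (1:ℝ) ≤ Real.exp π := by
    rw [← Real.exp_zero]; exact Real.exp_le_exp.2 Real.pi_pos.le
  have hX1 : (1:ℝ) ≤ X := le_trans hepi hXe
  have hY1 : (1:ℝ) ≤ Y := le_trans hepi hYe
  have hX0 : (0:ℝ) < X := by linarith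
  have hY0 : (0:ℝ) < Y := by linarith
  have hx0 : x ≠ 0 := by rw [← norm_pos_iff]; exact hXdef ▸ hX0
  have hy0 : y ≠ 0 := by rw [← norm_pos_iff]; exact hYdef ▸ hY0
  have hlogX1 : (1:ℝ) ≤ Real.log X := by
    have := Real.log_le_log (Real.exp_pos π) hXe
    rw [Real.log_exp] at this
    linarith [Real.pi_gt_three]
  have hlogYX : Real.log Y ≤ Real.log X := Real.log_le_log hY0 hyx.le
  have hlogY1 : (1:ℝ) ≤ Real.log Y := by
    have := Real.log_le_log (Real.exp_pos π) hYe
    rw [Real.log_exp] at this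
    linarith [Real.pi_gt_three]
  -- βy bound
  have hβy : ‖βy‖ ≤ (1 + C) / Y := by
    have h1 : ‖βy‖ ≤ ‖βy - 1/y‖ + ‖(1:ℂ)/y‖ := by
      calc ‖βy‖ = ‖(βy - 1/y) + 1/y‖ := by ring_nf
        _ ≤ _ := norm_add_le _ _
    have h2 : ‖(1:ℂ)/y‖ = 1 / Y := by
      rw [norm_div, norm_one]
    have h3 : C / Y^2 ≤ C / Y := by
      apply div_le_div_of_nonneg_left hC.le hY0
      nlinarith
    have := hβ
    rw [h2] at h1
    have : ‖βy‖ ≤ 1/Y + C/Y := by linarith [le_trans hβ h3]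
    calc ‖βy‖ ≤ 1/Y + C/Y := this
      _ = (1 + C)/Y := by ring
  -- log bounds
  have hLx : ‖sectorLog x‖ ≤ 2 * Real.log X := norm_sectorLog_le hXe
  have hLy : ‖sectorLog y‖ ≤ 2 * Real.log Y := norm_sectorLog_le hYe
  -- bound on t - x
  have htx : t - x = r * sectorLog x + s * sectorLog y + x * βy + η := by
    rw [ht]; ring
  have hD : ‖t - x‖ ≤ 2 * K * Real.log X + (1 + C) * X / Y + M := by
    rw [htx]
    have h1 : ‖r * sectorLog x‖ ≤ ‖r‖ * (2 * Real.log X) := by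
      rw [norm_mul]; exact mul_le_mul_of_nonneg_left hLx (norm_nonneg r)
    have h2 : ‖s * sectorLog y‖ ≤ ‖s‖ * (2 * Real.log X) := by
      rw [norm_mul]
      exact mul_le_mul (le_refl _) (le_trans hLy (by linarith)) (norm_nonneg _) (norm_nonneg s)
    have h3 : ‖x * βy‖ ≤ (1 + C) * X / Y := by
      rw [norm_mul]
      calc ‖x‖ * ‖βy‖ ≤ X * ((1 + C)/Y) := mul_le_mul_of_nonneg_left hβy hX0.le
        _ = (1 + C) * X / Y := by ring
    calc ‖r * sectorLog x + s * sectorLog y + x * βy + η‖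
        ≤ ‖r * sectorLog x‖ + ‖s * sectorLog y‖ + ‖x * βy‖ + ‖η‖ := by
          exact le_trans (norm_add_le _ _) (by
            have := le_trans (norm_add_le (r * sectorLog x + s * sectorLog y) (x * βy)) (add_le_add_left (norm_add_le _ _) _)
            linarith)
      _ ≤ ‖r‖ * (2 * Real.log X) + ‖s‖ * (2 * Real.log X) + (1 + C) * X / Y + M := by
          linarith
      _ = 2 * K * Real.log X + (1 + C) * X / Y + M := by rw [hK]; ring
  -- the three smallness facts
  have hKlog : 2 * K * Real.log X ≤ X / 6 := by
    have hXsq : (24 * (K+1))^2 ≤ X := by linarith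
    have hlog2 : Real.log X ≤ 2 * Real.sqrt X := log_le_of_sq (by positivity) hXsq hX1
    have hs : 24 * (K + 1) ≤ Real.sqrt X := by
      rw [show (24 : ℝ) * (K+1) = Real.sqrt ((24*(K+1))^2) from (Real.sqrt_sq (by positivity)).symm]
      exact Real.sqrt_le_sqrt hXsq
    have hsq : Real.sqrt X * Real.sqrt X = X := Real.mul_self_sqrt hX0.le
    nlinarith [Real.sqrt_nonneg X]
  have hCX : (1 + C) * X / Y ≤ X / 6 := by
    rw [div_le_div_iff₀ hY0 (by norm_num : (0:ℝ) < 6)]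
    nlinarith
  have hMX : M ≤ X / 6 := by nlinarith
  have hDhalf : ‖t - x‖ ≤ X / 2 := by linarith
  have htnorm : X / 2 ≤ ‖t‖ := by
    have := norm_sub_norm_le t x
    have h := abs_sub_abs_le_abs_sub (‖x‖) (‖t‖)
    have : ‖x‖ - ‖t‖ ≤ ‖t - x‖ := by
      have := norm_sub_norm_le x t
      calc ‖x‖ - ‖t‖ ≤ ‖x - t‖ := this
        _ = ‖t - x‖ := by rw [norm_sub_rev]
    linarith
  have ht0 : t ≠ 0 := by
    intro h; rw [h] at htnorm; simp at htnorm; linarith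
  -- key algebraic identity
  have key : 1/x - 1/t - βy/x =
      (r * sectorLog x + s * sectorLog y + η - βy * (t - x)) / (x * t) := by
    have e3 : r * sectorLog x + s * sectorLog y + η - βy * (t - x) = t - x - t * βy := by
      linear_combination -htx
    rw [eq_div_iff (mul_ne_zero hx0 ht0), e3]
    field_simp
  rw [key]
  have hnum : ‖r * sectorLog x + s * sectorLog y + η - βy * (t - x)‖ ≤
      (2 * K + M) * (2 + C) * Real.log X + (1 + C)^2 * X / Y^2 := by
    have h1 : ‖r * sectorLog x + s * sectorLog y + η‖ ≤ 2 * K * Real.log X + M := by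
      have ha : ‖r * sectorLog x‖ ≤ ‖r‖ * (2 * Real.log X) := by
        rw [norm_mul]; exact mul_le_mul_of_nonneg_left hLx (norm_nonneg r)
      have hb : ‖s * sectorLog y‖ ≤ ‖s‖ * (2 * Real.log X) := by
        rw [norm_mul]
        exact mul_le_mul (le_refl _) (le_trans hLy (by linarith)) (norm_nonneg _) (norm_nonneg s)
      calc ‖r * sectorLog x + s * sectorLog y + η‖
          ≤ ‖r * sectorLog x‖ + ‖s * sectorLog y‖ + ‖η‖ :=
            le_trans (norm_add_le _ _) (add_le_add_left (norm_add_le _ _) _)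
        _ ≤ 2 * K * Real.log X + M := by rw [hK] at *; nlinarith
    have h2 : ‖βy * (t - x)‖ ≤ (1 + C)/Y * (2 * K * Real.log X + (1 + C) * X / Y + M) := by
      rw [norm_mul]
      exact mul_le_mul hβy hD (norm_nonneg _) (by positivity)
    have h3 : ‖r * sectorLog x + s * sectorLog y + η - βy * (t - x)‖ ≤
        (2 * K * Real.log X + M) + (1 + C)/Y * (2 * K * Real.log X + (1 + C) * X / Y + M) := by
      calc _ ≤ ‖r * sectorLog x + s * sectorLog y + η‖ + ‖βy * (t - x)‖ := norm_sub_le _ _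
        _ ≤ _ := add_le_add h1 h2
    -- simplify using Y ≥ 1, log X ≥ 1
    have hYbig : (1+C)/Y * (2 * K * Real.log X + M) ≤ (1+C) * (2 * K * Real.log X + M) := by
      have : (1+C)/Y ≤ (1+C) := by
        rw [div_le_iff₀ hY0]; nlinarith
      exact mul_le_mul_of_nonneg_right this (by nlinarith)
    have hY2 : (1+C)/Y * ((1 + C) * X / Y) = (1+C)^2 * X / Y^2 := by
      field_simp
    have hM' : M ≤ M * Real.log X := by nlinarith
    calc ‖r * sectorLog x + s * sectorLog y + η - βy * (t - x)‖
        ≤ (2 * K * Real.log X + M) + (1 + C)/Y * (2 * K * Real.log X + (1 + C) * X / Y + M) := h3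
      _ = (2 * K * Real.log X + M) + (1+C)/Y * (2 * K * Real.log X + M) + (1+C)/Y * ((1+C) * X / Y) := by ring
      _ ≤ (2 * K * Real.log X + M) + (1+C) * (2 * K * Real.log X + M) + (1+C)^2 * X / Y^2 := by
          rw [← hY2]; linarith
      _ ≤ (2 * K + M) * (2 + C) * Real.log X + (1 + C)^2 * X / Y^2 := by nlinarith
  have hden : ‖x * t‖ ≥ X * (X / 2) := by
    rw [norm_mul]
    exact mul_le_mul_of_nonneg_left htnorm hX0.le
  have hden0 : (0:ℝ) < X * (X/2) := by positivity
  rw [norm_div]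
  have hfinal : ‖r * sectorLog x + s * sectorLog y + η - βy * (t - x)‖ / ‖x * t‖ ≤
      ((2 * K + M) * (2 + C) * Real.log X + (1 + C)^2 * X / Y^2) / (X * (X/2)) := by
    apply div_le_div₀ (by positivity) hnum hden0 hden
  refine le_trans hfinal ?_
  rw [div_le_iff₀ hden0]
  have expand : (2 * (2 * K + M) * (2 + C) + 2 * (1 + C)^2) * (Real.log X / X ^ 2 + 1 / (X * Y ^ 2)) * (X * (X/2)) =
      (2 * K + M) * (2 + C) * Real.log X + (1+C)^2 * X / Y^2
      + (2 * K + M) * (2+C) * X / Y^2 + (1+C)^2 * Real.log X := by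
    field_simp
    ring
  rw [expand]
  have t1 : (0:ℝ) ≤ (2 * K + M) * (2+C) * X / Y^2 := by positivity
  have t2 : (0:ℝ) ≤ (1+C)^2 * Real.log X :=
    mul_nonneg (by positivity) (by linarith)
  linarith
end

section
/- Let (y_n), (t_n), (x_n) be sequences with |x_n| ~ n, |t_n| ~ n, |y_n| ~ log n, and define ξ_n = y_n − log(y_n) + log(t_n). Suppose y_{n+1} − y_n = 1/x_n + O(1/x_n²), log(y_{n+1}) − log(y_n) = 1/(x_n y_n) + O(1/(x_n² y_n), 1/(x_n y_n²)), log(t_{n+1}) − log(t_n) = −1/t_n + O(1/t_n²), and 1/x_n − 1/t_n = 1/(x_n y_n) + O(1/(x_n y_n²), 1/x_n^{4/3}). Then |ξ_{n+1} − ξ_n| = O(1/(n log² n)), hence Σ|ξ_{n+1} − ξ_n| < ∞ and ξ_n converges. -/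
/-!
The increment `ξ_{n+1} - ξ_n` is exactly the combination
`(Δy - 1/x) - (Δ log y - 1/(x y)) + (Δ log t + 1/t) + (1/x - 1/t - 1/(x y))`
of the four error terms of the hypotheses, since the main terms cancel. With `|x_n|, |t_n| ≍ n`
and `|y_n| ≍ log n`, each error is `O(1/(n log² n))`; for the worst one, `1/x_n^{4/3}`, this is
`log² n = o(n^{1/3})`. The series `∑ 1/(n log² n)` converges by Cauchy condensation, so the
increments are absolutely summable and `ξ_n` is Cauchy.
-/

open Filter Topology Asymptotics

lemma summable_one_div_natCast_mul_log_sq :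
    Summable fun n : ℕ => 1 / ((n : ℝ) * Real.log n ^ 2) := by
  rw [← summable_condensed_iff_of_eventually_nonneg
    (Eventually.of_forall fun n => by positivity)]
  · have hcond : ∀ k : ℕ, (2 : ℝ) ^ k * (1 / (((2 ^ k : ℕ) : ℝ) * Real.log (2 ^ k : ℕ) ^ 2)) =
        (Real.log 2 ^ 2)⁻¹ * ((k : ℝ) ^ 2)⁻¹ := fun k => by
      rw [Nat.cast_pow, Nat.cast_ofNat, Real.log_pow, one_div, mul_inv, ← mul_assoc,
        mul_inv_cancel₀ (by positivity), one_mul, mul_pow, mul_inv, mul_comm]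
    simp_rw [hcond]
    exact (Real.summable_nat_pow_inv.mpr one_lt_two).mul_left _
  · filter_upwards
      [(Real.tendsto_log_atTop.comp tendsto_natCast_atTop_atTop).eventually_gt_atTop 0,
      eventually_gt_atTop 0] with n hlogn hn
    have hn' : (0 : ℝ) < n := Nat.cast_pos.mpr hn
    gcongr <;> omega

lemma isBigO_inv_of_tendsto_div {α 𝕜 : Type*} [NormedField 𝕜] {l : Filter α} {u v : α → 𝕜}
    {c : 𝕜} (hc : c ≠ 0) (h : Tendsto (fun a => u a / v a) l (𝓝 c)) :
    (fun a => (u a)⁻¹) =O[l] fun a => (v a)⁻¹ :=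
  isBigO_of_div_tendsto_nhds_of_ne_zero (by simpa only [inv_div_inv] using h) hc

lemma isBigO_atTop_iff_exists_bound {E : Type*} [Norm E] {f : ℕ → E} {g : ℕ → ℝ}
    (hg : ∀ n, 0 ≤ g n) :
    f =O[atTop] g ↔ ∃ C : ℝ, ∃ N : ℕ, ∀ n ≥ N, ‖f n‖ ≤ C * g n := by
  simp only [isBigO_iff, eventually_atTop, Real.norm_of_nonneg (hg _)]

lemma isBigO_inv_log_one : (fun n : ℕ => (Real.log n)⁻¹) =O[atTop] fun _ => (1 : ℝ) :=
  (Real.tendsto_log_atTop.comp tendsto_natCast_atTop_atTop).inv_tendsto_atTop.isBigO_one ℝ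

lemma isBigO_inv_rpow_inv_log_sq {s : ℝ} (hs : 0 < s) :
    (fun n : ℕ => ((n : ℝ) ^ s)⁻¹) =O[atTop] fun n => (Real.log n ^ 2)⁻¹ := by
  have hlog : (fun n : ℕ => Real.log n ^ 2) =O[atTop] fun n => (n : ℝ) ^ s := by
    simpa only [Function.comp_def, Real.rpow_two] using
      (isLittleO_log_rpow_rpow_atTop 2 hs).isBigO.comp_tendsto tendsto_natCast_atTop_atTop
  refine hlog.inv_rev ?_
  filter_upwards [(Real.tendsto_log_atTop.comp tendsto_natCast_atTop_atTop).eventually_gt_atTop 0]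
    with n hn h0
  exact absurd h0 (by positivity)

lemma isBigO_inv_natCast_inv_log_sq :
    (fun n : ℕ => (n : ℝ)⁻¹) =O[atTop] fun n => (Real.log n ^ 2)⁻¹ := by
  simpa only [Real.rpow_one] using isBigO_inv_rpow_inv_log_sq one_pos

section Gauge

variable {X Y : ℕ → ℝ}

lemma isBigO_one_div_sq (hX : (fun n => (X n)⁻¹) =O[atTop] fun n => (n : ℝ)⁻¹) :
    (fun n => 1 / X n ^ 2) =O[atTop] fun n : ℕ => 1 / ((n : ℝ) * Real.log n ^ 2) :=
  (hX.mul (hX.trans isBigO_inv_natCast_inv_log_sq)).congr (fun n => by ring) fun n => by ring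

lemma isBigO_one_div_sq_mul (hX : (fun n => (X n)⁻¹) =O[atTop] fun n => (n : ℝ)⁻¹)
    (hY : (fun n => (Y n)⁻¹) =O[atTop] fun n => (Real.log n)⁻¹) :
    (fun n => 1 / (X n ^ 2 * Y n)) =O[atTop] fun n : ℕ => 1 / ((n : ℝ) * Real.log n ^ 2) :=
  ((hX.mul (hX.trans isBigO_inv_natCast_inv_log_sq)).mul (hY.trans isBigO_inv_log_one)).congr
    (fun n => by ring) fun n => by ring

lemma isBigO_one_div_mul_sq (hX : (fun n => (X n)⁻¹) =O[atTop] fun n => (n : ℝ)⁻¹)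
    (hY : (fun n => (Y n)⁻¹) =O[atTop] fun n => (Real.log n)⁻¹) :
    (fun n => 1 / (X n * Y n ^ 2)) =O[atTop] fun n : ℕ => 1 / ((n : ℝ) * Real.log n ^ 2) :=
  ((hX.mul hY).mul hY).congr (fun n => by ring) fun n => by ring

lemma isBigO_one_div_rpow_four_thirds (hX0 : ∀ n, 0 ≤ X n)
    (hX : (fun n => (X n)⁻¹) =O[atTop] fun n => (n : ℝ)⁻¹) :
    (fun n => 1 / X n ^ ((4 : ℝ) / 3)) =O[atTop]
      fun n : ℕ => 1 / ((n : ℝ) * Real.log n ^ 2) := by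
  have hcube : (fun n => (X n)⁻¹ ^ ((1 : ℝ) / 3)) =O[atTop]
      fun n : ℕ => ((n : ℝ) ^ ((1 : ℝ) / 3))⁻¹ := by
    simpa only [Real.inv_rpow (Nat.cast_nonneg _)] using
      hX.rpow (by norm_num) (Eventually.of_forall fun n => by positivity)
  refine (hX.mul (hcube.trans (isBigO_inv_rpow_inv_log_sq (by norm_num)))).congr
    (fun n => ?_) fun n => by ring
  rw [show (4 : ℝ) / 3 = 1 + 1 / 3 by norm_num, Real.rpow_add' (hX0 n) (by norm_num),
    Real.rpow_one, Real.inv_rpow (hX0 n)]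
  ring

end Gauge

/-- Convergence of the fiber coordinate along orbits: if `|x_n| ~ n`, `|t_n| ~ n`,
`|y_n| ~ log n` and the displayed telescoping estimates hold, then
`ξ_n = y_n − log y_n + log t_n` satisfies `|ξ_{n+1} − ξ_n| = O(1/(n log² n))`,
hence `Σ|ξ_{n+1} − ξ_n| < ∞` and `ξ_n` converges. -/
theorem xi_cauchy_and_converges (x t y : ℕ → ℂ) (cx ct cy : ℝ)
    (hcx : 0 < cx) (hct : 0 < ct) (hcy : 0 < cy)
    (hx : Tendsto (fun n : ℕ => ‖x n‖ / n) atTop (𝓝 cx))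
    (ht : Tendsto (fun n : ℕ => ‖t n‖ / n) atTop (𝓝 ct))
    (hy : Tendsto (fun n : ℕ => ‖y n‖ / Real.log n) atTop (𝓝 cy))
    (h1 : ∃ C : ℝ, ∃ N : ℕ, ∀ n ≥ N,
      ‖y (n + 1) - y n - 1 / x n‖ ≤ C * (1 / ‖x n‖ ^ 2))
    (h2 : ∃ C : ℝ, ∃ N : ℕ, ∀ n ≥ N,
      ‖Complex.log (y (n + 1)) - Complex.log (y n) - 1 / (x n * y n)‖ ≤
        C * (1 / (‖x n‖ ^ 2 * ‖y n‖) + 1 / (‖x n‖ * ‖y n‖ ^ 2)))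
    (h3 : ∃ C : ℝ, ∃ N : ℕ, ∀ n ≥ N,
      ‖Complex.log (t (n + 1)) - Complex.log (t n) + 1 / t n‖ ≤ C * (1 / ‖t n‖ ^ 2))
    (h4 : ∃ C : ℝ, ∃ N : ℕ, ∀ n ≥ N,
      ‖1 / x n - 1 / t n - 1 / (x n * y n)‖ ≤
        C * (1 / (‖x n‖ * ‖y n‖ ^ 2) + 1 / ‖x n‖ ^ ((4 : ℝ) / 3))) :
    (∃ C' : ℝ, ∃ N' : ℕ, ∀ n ≥ N',
      ‖(y (n + 1) - Complex.log (y (n + 1)) + Complex.log (t (n + 1))) -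
        (y n - Complex.log (y n) + Complex.log (t n))‖ ≤
        C' * (1 / (n * (Real.log n) ^ 2))) ∧
    (Summable fun n : ℕ =>
      ‖(y (n + 1) - Complex.log (y (n + 1)) + Complex.log (t (n + 1))) -
        (y n - Complex.log (y n) + Complex.log (t n))‖) ∧
    ∃ l : ℂ, Tendsto (fun n : ℕ => y n - Complex.log (y n) + Complex.log (t n))
      atTop (𝓝 l) := by
  have hX := isBigO_inv_of_tendsto_div hcx.ne' hx
  have hT := isBigO_inv_of_tendsto_div hct.ne' ht
  have hY := isBigO_inv_of_tendsto_div hcy.ne' hy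
  have e1 := ((isBigO_atTop_iff_exists_bound fun n => by positivity).2 h1).trans
    (isBigO_one_div_sq hX)
  have e2 := ((isBigO_atTop_iff_exists_bound fun n => by positivity).2 h2).trans
    ((isBigO_one_div_sq_mul hX hY).add (isBigO_one_div_mul_sq hX hY))
  have e3 := ((isBigO_atTop_iff_exists_bound fun n => by positivity).2 h3).trans
    (isBigO_one_div_sq hT)
  have e4 := ((isBigO_atTop_iff_exists_bound fun n => by positivity).2 h4).trans
    ((isBigO_one_div_mul_sq hX hY).add
      (isBigO_one_div_rpow_four_thirds (fun n => norm_nonneg _) hX))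
  have hdiff : (fun n => (y (n + 1) - Complex.log (y (n + 1)) + Complex.log (t (n + 1))) -
      (y n - Complex.log (y n) + Complex.log (t n))) =O[atTop]
      fun n : ℕ => 1 / ((n : ℝ) * Real.log n ^ 2) :=
    (((e1.sub e2).add e3).add e4).congr_left fun n => by ring
  have hsum := summable_of_isBigO_nat summable_one_div_natCast_mul_log_sq hdiff.norm_left
  refine ⟨(isBigO_atTop_iff_exists_bound fun n => by positivity).1 hdiff, hsum, ?_⟩
  refine cauchySeq_tendsto_of_complete (cauchySeq_of_summable_dist ?_)
  simpa only [dist_eq_norm, norm_sub_rev] using hsum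
end
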